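/- Trace decomposition: for any execution ⟨e⟩^𝒫 ⋉ P ─α₁→ E₁ ⋉ J₁ ─α₂→ … ─α_n→ E_n ⋉ J_n of a monitored controller, there exist enforcement actions λ₁,…,λ_n such that (1) ⟨e⟩^𝒫 ─λ₁→ E₁ ─λ₂→ … ─λ_n→ E_n with α_i = enfAct(λ_i); and (2) setting J₀ = P, for each 1 ≤ i ≤ n either J_{i−1} ─ctrlAct(λ_i)→ J_i with ctrlAct(λ_i) ∈ 𝒫, or J_i = J_{i−1}. -/

import Mathlib

namespace RTEnf

/-- Local (regular) properties over events in `E`. -/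
inductive LProp (E : Type) : Type
  | bot   : LProp E
  | eps   : LProp E
  | pre   : E → LProp E → LProp E
  | or    : LProp E → LProp E → LProp E
  | seq   : LProp E → LProp E → LProp E
  | inter : LProp E → LProp E → LProp E

/-- Global properties: Kleene closures of local properties and intersections. -/
inductive GProp (E : Type) : Type
  | star  : LProp E → GProp E
  | inter : GProp E → GProp E → GProp E

variable {E V : Type}

/-- Trace semantics of local properties. -/
def lsem : LProp E → Set (List E)
  | .bot => ∅
  | .eps => {[]}
  | .pre a p => {t | ∃ t' ∈ lsem p, t = a :: t'}
  | .or p q => lsem p ∪ lsem q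
  | .seq p q => {t | ∃ t₁ ∈ lsem p, ∃ t₂ ∈ lsem q, t = t₁ ++ t₂}
  | .inter p q => lsem p ∩ lsem q

/-- Trace semantics of global properties:
`⟦p*⟧ = {ε} ∪ ⋃_{n≥1} { t₁⋯tₙ | tᵢ ∈ ⟦p⟧ }` and `⟦e₁∩e₂⟧ = ⟦e₁⟧ ∩ ⟦e₂⟧`. -/
def gsem : GProp E → Set (List E)
  | .star p => {t | t = [] ∨ ∃ l : List (List E), l ≠ [] ∧ (∀ s ∈ l, s ∈ lsem p) ∧ t = l.flatten}
  | .inter e f => gsem e ∩ gsem f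

/-- Well-formed local properties (every branch terminates with the event `endE`). -/
inductive WFL (endE : E) : LProp E → Prop
  | endEps : WFL endE (.pre endE .eps)
  | seq {p q} : WFL endE q → WFL endE (.seq p q)
  | inter {p q} : WFL endE p → WFL endE q → WFL endE (.inter p q)
  | pre {a p} : WFL endE p → WFL endE (.pre a p)
  | or {p q} : WFL endE p → WFL endE q → WFL endE (.or p q)

/-- Well-formed global properties. -/
inductive WFG (endE : E) : GProp E → Prop
  | star {p} : WFL endE p → WFG endE (.star p)
  | inter {e f} : WFG endE e → WFG endE f → WFG endE (.inter e f)

/-- `unionOver A p` is the property `∪_{a ∈ A} a.p`. -/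
def unionOver (l : List E) (p : LProp E) : LProp E :=
  l.foldr (fun a q => .or (.pre a p) q) .bot

/-- `boundedProp endE A k` is the property `A^{≤k}`:
`A^{≤0} = end` and `A^{≤k} = end ∪ A.A^{≤k−1}`. -/
def boundedProp (endE : E) (A : List E) : ℕ → LProp E
  | 0 => .pre endE .eps
  | k+1 => .or (.pre endE .eps) (unionOver A (boundedProp endE A k))

/-- The list of pure events `PEvents = Events ∖ {end}`. -/
noncomputable def PEventsL [Fintype E] [DecidableEq E] (endE : E) : List E :=
  ((Finset.univ : Finset E).erase endE).toList

/-- The list of pure events different from `a`: `PEvents ∖ {a}`. -/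
noncomputable def PEventsNo [Fintype E] [DecidableEq E] (endE a : E) : List E :=
  (((Finset.univ : Finset E).erase endE).erase a).toList

/-- Row `h = 1` of the bounded-persistency family `q¹ₖ`. -/
def BPlast (endE a : E) (pe pne : List E) : ℕ → LProp E
  | 0 => .pre a (.pre endE .eps)
  | k+1 => .or (.pre a (boundedProp endE pe k)) (unionOver pne (BPlast endE a pe pne k))

/-- Row `h ≥ 2` of the bounded-persistency family `qʰₖ`, with `cont = q^{h−1}_maxa`. -/
def BProw (endE a : E) (pe pne : List E) (cont : LProp E) : ℕ → LProp E
  | 0 => .pre a (.pre endE cont)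
  | k+1 => .or (.pre a (.seq (boundedProp endE pe k) cont)) (unionOver pne (BProw endE a pe pne cont k))

/-- `BPq … h = qʰ_maxa` for bounded persistency. -/
def BPq (endE a : E) (pe pne : List E) (maxa : ℕ) : ℕ → LProp E
  | 0 => .bot
  | 1 => BPlast endE a pe pne maxa
  | h+2 => BProw endE a pe pne (BPq endE a pe pne maxa (h+1)) maxa

/-- Bounded persistency `BP(a)[m]`: the event `a` must occur in all of the next `m` scan cycles. -/
noncomputable def BP [Fintype E] [DecidableEq E] (endE : E) (maxa : ℕ) (a : E) (m : ℕ) : LProp E :=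
  BPq endE a (PEventsL endE) (PEventsNo endE a) maxa m

/-- Row `h = 1` of the persistent-conditional family. -/
def PClast (endE a : E) (p : LProp E) (pne : List E) : ℕ → LProp E
  | 0 => .eps
  | k+1 => .or (.pre endE .eps) (.or (.pre a p) (unionOver pne (PClast endE a p pne k)))

/-- Row `h ≥ 2` of the persistent-conditional family, with `cont = q^{h−1}_maxa`. -/
def PCrow (endE a : E) (p : LProp E) (pne : List E) (cont : LProp E) : ℕ → LProp E
  | 0 => .pre endE cont
  | k+1 => .or (.pre endE cont) (.or (.pre a p) (unionOver pne (PCrow endE a p pne cont k)))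

def PCq (endE a : E) (p : LProp E) (pne : List E) (maxa : ℕ) : ℕ → LProp E
  | 0 => .bot
  | 1 => PClast endE a p pne maxa
  | h+2 => PCrow endE a p pne (PCq endE a p pne maxa (h+1)) maxa

/-- Persistent conditional `PCnd(a ▷ p)[m]`. -/
noncomputable def PCnd [Fintype E] [DecidableEq E] (endE : E) (maxa : ℕ) (a : E) (p : LProp E) (m : ℕ) : LProp E :=
  PCq endE a p (PEventsNo endE a) maxa m

/-- The single-trigger case family `qₖ` (defining `Cnd`). -/
def CaseQ (endE a : E) (p : LProp E) (pne : List E) : ℕ → LProp E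
  | 0 => .pre endE .eps
  | k+1 => .or (.pre endE .eps) (.or (.pre a p) (unionOver pne (CaseQ endE a p pne k)))

/-- Conditional `Cnd(a ▷ p) = Case({(a,p)})`. -/
noncomputable def Cnd [Fintype E] [DecidableEq E] (endE : E) (maxa : ℕ) (a : E) (p : LProp E) : LProp E :=
  CaseQ endE a p (PEventsNo endE a) maxa

/-- `iterSeq p n = p ; ⋯ ; p` (`n` times). -/
def iterSeq (p : LProp E) : ℕ → LProp E
  | 0 => .eps
  | n+1 => .seq p (iterSeq p n)

/-- Conditional bounded persistency
`Pc(a ▷ b)[m,n] = Cnd(a ▷ (PEvents^{≤maxa})^{m−1} ; BP(b)[n−m+1])`. -/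
noncomputable def CBPprop [Fintype E] [DecidableEq E] (endE : E) (maxa : ℕ) (a b : E) (m n : ℕ) : LProp E :=
  Cnd endE maxa a (.seq (iterSeq (boundedProp endE (PEventsL endE) maxa) (m-1)) (BP endE maxa b (n-m+1)))

/-- Bounded minimum duration `MinD(a,b)[m,n] = Cnd(a ▷ PCnd(b ▷ BP(b)[n])[m])`. -/
noncomputable def MinD [Fintype E] [DecidableEq E] (endE : E) (maxa : ℕ) (a b : E) (m n : ℕ) : LProp E :=
  Cnd endE maxa a (PCnd endE maxa b (BP endE maxa b n) m)

/-! ## Edit automata, synthesis, controllers -/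

/-- Enforcement actions: allow, suppress, and `ins a b` = insert `b` before controller action `a`. -/
inductive EAct (E : Type) : Type
  | allow : E → EAct E
  | supp  : E → EAct E
  | ins   : E → E → EAct E

/-- The action emitted by the monitored system (`τ` = `none` for suppression). -/
def enfAct : EAct E → Option E
  | .allow a => some a
  | .supp _ => none
  | .ins _ b => some b

/-- The action performed by the controller under an enforcement action. -/
def ctrlAct : EAct E → E
  | .allow a => a
  | .supp a => a
  | .ins a _ => a

/-- `nullable p` iff `[] ∈ ⟦p⟧`. -/
def nullable : LProp E → Prop
  | .bot => False
  | .eps => True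
  | .pre _ _ => False
  | .or p q => nullable p ∨ nullable q
  | .seq p q => nullable p ∧ nullable q
  | .inter p q => nullable p ∧ nullable q

/-- Derivative step of a local property: `p` can begin with `a`, leaving residual `p'`. -/
inductive LStep : LProp E → E → LProp E → Prop
  | pre {a : E} {p : LProp E} : LStep (.pre a p) a p
  | orL {p q : LProp E} {a p'} : LStep p a p' → LStep (.or p q) a p'
  | orR {p q : LProp E} {a q'} : LStep q a q' → LStep (.or p q) a q'
  | seqL {p q : LProp E} {a p'} : LStep p a p' → LStep (.seq p q) a (.seq p' q)
  | seqR {p q : LProp E} {a q'} : nullable p → LStep q a q' → LStep (.seq p q) a q'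
  | inter {p q : LProp E} {a p' q'} : LStep p a p' → LStep q a q' → LStep (.inter p q) a (.inter p' q')

/-- States (derivatives) of the synthesised automaton: for each star a residual together
with the loop body (the recursion `X = ⟨p⟩_X`), and cross products for intersections. -/
inductive GConf (E : Type) : Type
  | star  : LProp E → LProp E → GConf E
  | inter : GConf E → GConf E → GConf E

/-- Derivative step of a configuration. -/
inductive GStep : GConf E → E → GConf E → Prop
  | starCont {r body : LProp E} {a r'} : LStep r a r' → GStep (.star r body) a (.star r' body)
  | starLoop {r body : LProp E} {a r'} : nullable r → LStep body a r' → GStep (.star r body) a (.star r' body)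
  | inter {c d : GConf E} {a c' d'} : GStep c a c' → GStep d a d' → GStep (.inter c d) a (.inter c' d')

/-- Initial state of the synthesised automaton `⟨e⟩^𝒫`. -/
def GProp.conf : GProp E → GConf E
  | .star p => .star .eps p
  | .inter e f => .inter e.conf f.conf

/-- Transitions of the synthesised edit automaton `⟨e⟩^𝒫` (on derivative states):
allow any currently admissible event, insert an admissible event (≠ end) before an `end`
of the controller, and suppress any other action of `𝒫 ∖ {tick, end}`. -/
inductive SynStep (P : Set E) (tick endE : E) : GConf E → EAct E → GConf E → Prop
  | allow {c a c'} : GStep c a c' → SynStep P tick endE c (.allow a) c'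
  | insert {c a c'} : GStep c a c' → a ≠ endE → SynStep P tick endE c (.ins endE a) c'
  | supp {c a} : a ∈ P → a ≠ tick → a ≠ endE → (∀ c', ¬ GStep c a c') →
      SynStep P tick endE c (.supp a) c

inductive SynSteps (P : Set E) (tick endE : E) : GConf E → List (EAct E) → GConf E → Prop
  | nil {c} : SynSteps P tick endE c [] c
  | cons {c l c' ls c''} : SynStep P tick endE c l c' → SynSteps P tick endE c' ls c'' →
      SynSteps P tick endE c (l :: ls) c''

/-- Transitions of the cross-product automaton `⟨p₁⟩_X × ⟨p₂⟩_X` synthesised from a local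
property (states are residual local properties). -/
inductive LSynStep (P : Set E) (tick endE : E) : LProp E → EAct E → LProp E → Prop
  | allow {p a p'} : LStep p a p' → LSynStep P tick endE p (.allow a) p'
  | insert {p a p'} : LStep p a p' → a ≠ endE → LSynStep P tick endE p (.ins endE a) p'
  | supp {p a} : a ∈ P → a ≠ tick → a ≠ endE → (∀ p', ¬ LStep p a p') →
      LSynStep P tick endE p (.supp a) p

inductive LSynSteps (P : Set E) (tick endE : E) : LProp E → List (EAct E) → LProp E → Prop
  | nil {p} : LSynSteps P tick endE p [] p
  | cons {p l p' ls p''} : LSynStep P tick endE p l p' → LSynSteps P tick endE p' ls p'' →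
      LSynSteps P tick endE p (l :: ls) p''

/-- Controllers (TPL-like timed sequential processes): `tick` prefixing, input sums under
timeout, output under timeout, actuator outputs, end of scan cycle, and process variables. -/
inductive Proc (E V : Type) : Type
  | tickP : Proc E V → Proc E V
  | timeoutSum : List (E × Proc E V) → Proc E V → Proc E V
  | timeoutOut : E → Proc E V → Proc E V → Proc E V
  | out : E → Proc E V → Proc E V
  | endP : V → Proc E V
  | var : V → Proc E V

/-- LTS of controllers, with recursion environment `env` (equations `X = env X`). -/
inductive CStep (env : V → Proc E V) (tick endE : E) : Proc E V → E → Proc E V → Prop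
  | tickStep {P} : CStep env tick endE (.tickP P) tick P
  | read {bs alt a P} : (a, P) ∈ bs → CStep env tick endE (.timeoutSum bs alt) a P
  | timeout {bs alt} : CStep env tick endE (.timeoutSum bs alt) tick alt
  | outStep {a P Q} : CStep env tick endE (.timeoutOut a P Q) a P
  | outTimeout {a P Q} : CStep env tick endE (.timeoutOut a P Q) tick Q
  | wr {a P} : CStep env tick endE (.out a P) a P
  | endStep {X} : CStep env tick endE (.endP X) endE (.var X)
  | unfold {X a P'} : CStep env tick endE (env X) a P' → CStep env tick endE (.var X) a P'

inductive CSteps (env : V → Proc E V) (tick endE : E) : Proc E V → List E → Proc E V → Prop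
  | nil {J} : CSteps env tick endE J [] J
  | cons {J a J' l J''} : CStep env tick endE J a J' → CSteps env tick endE J' l J'' →
      CSteps env tick endE J (a :: l) J''

variable {Q : Type}

/-- Monitored controller `E ⋉ J` for a generic enforcer LTS `estep` and controller LTS `cstep`;
labels are `some a` (observable) or `none` (τ, from suppression). -/
inductive MStep (estep : Q → EAct E → Q → Prop) (cstep : Proc E V → E → Proc E V → Prop) :
    Q × Proc E V → Option E → Q × Proc E V → Prop
  | allow {q J a q' J'} : estep q (.allow a) q' → cstep J a J' →
      MStep estep cstep (q, J) (some a) (q', J')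
  | suppress {q J a q' J'} : estep q (.supp a) q' → cstep J a J' →
      MStep estep cstep (q, J) none (q', J')
  | insert {q J a b q' J'} : estep q (.ins a b) q' → cstep J a J' →
      (∀ q'', ¬ estep q (.allow a) q'') →
      MStep estep cstep (q, J) (some b) (q', J)

inductive MSteps (estep : Q → EAct E → Q → Prop) (cstep : Proc E V → E → Proc E V → Prop) :
    Q × Proc E V → List (Option E) → Q × Proc E V → Prop
  | nil {s} : MSteps estep cstep s [] s
  | cons {s l s' ls s''} : MStep estep cstep s l s' → MSteps estep cstep s' ls s'' →
      MSteps estep cstep s (l :: ls) s''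

/-- The `go` edit automaton: allows every action. -/
def goStep : Unit → EAct E → Unit → Prop := fun _ l _ => ∃ a, l = EAct.allow a

/-- Events occurring in a local property. -/
def LProp.events : LProp E → Set E
  | .bot => ∅
  | .eps => ∅
  | .pre a p => insert a p.events
  | .or p q => p.events ∪ q.events
  | .seq p q => p.events ∪ q.events
  | .inter p q => p.events ∪ q.events

/-- Events occurring in a global property. -/
def GProp.events : GProp E → Set E
  | .star p => p.events
  | .inter e f => e.events ∪ f.events

/-- The events a local property can currently begin with. -/
def firsts (p : LProp E) : Set E := {a | ∃ p', LStep p a p'}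

/-- Deterministic local properties: every union has pairwise distinct starting events. -/
inductive DetL : LProp E → Prop
  | bot : DetL .bot
  | eps : DetL .eps
  | pre {a p} : DetL p → DetL (.pre a p)
  | seq {p q} : DetL p → DetL q → DetL (.seq p q)
  | inter {p q} : DetL p → DetL q → DetL (.inter p q)
  | or {p q} : DetL p → DetL q → (∀ a, a ∈ firsts p → a ∉ firsts q) → DetL (.or p q)

inductive DetG : GProp E → Prop
  | star {p} : DetL p → DetG (.star p)
  | inter {e f} : DetG e → DetG f → DetG (.inter e f)

/-- The residual local property represented by a configuration. -/
def GConf.toLocal : GConf E → LProp E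
  | .star r _ => r
  | .inter c d => .inter c.toLocal d.toLocal

/-- The reflexive–transitive subterm preorder `≼` on local properties, closed under `∩` and `;`. -/
inductive SubL : LProp E → LProp E → Prop
  | refl {p} : SubL p p
  | trans {p q r} : SubL p q → SubL q r → SubL p r
  | preSub {a p} : SubL p (.pre a p)
  | orL {p q} : SubL p (.or p q)
  | orR {p q} : SubL q (.or p q)
  | seqL {p q} : SubL p (.seq p q)
  | seqR {p q} : SubL q (.seq p q)
  | interL {p q} : SubL p (.inter p q)
  | interR {p q} : SubL q (.inter p q)
  | interCongr {p₁ p₂ q₁ q₂} : SubL p₁ q₁ → SubL p₂ q₂ → SubL (.inter p₁ p₂) (.inter q₁ q₂)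
  | seqCongr {p₁ q₁ r} : SubL p₁ q₁ → SubL (.seq p₁ r) (.seq q₁ r)

/-- `Precl p e`: the local property `p` is a `≼`-relative of the global property `e`. -/
inductive Precl : LProp E → GProp E → Prop
  | star {p q} : SubL p q → Precl p (.star q)
  | inter {p₁ p₂ e₁ e₂} : Precl p₁ e₁ → Precl p₂ e₂ → Precl (.inter p₁ p₂) (.inter e₁ e₂)

/-- The controller follows a sequence of enforcement actions: for each action either the
controller performs the corresponding action (in `𝒫`) or it stays put. -/
inductive CtrlFollow (P : Set E) (cstep : Proc E V → E → Proc E V → Prop) :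
    Proc E V → List (EAct E) → Proc E V → Prop
  | nil {J} : CtrlFollow P cstep J [] J
  | step {J l J' ls J''} : ctrlAct l ∈ P → cstep J (ctrlAct l) J' →
      CtrlFollow P cstep J' ls J'' → CtrlFollow P cstep J (l :: ls) J''
  | skip {J l ls J''} : CtrlFollow P cstep J ls J'' → CtrlFollow P cstep J (l :: ls) J''

/-- Size of a local property (number of operators). -/
def LProp.size : LProp E → ℕ
  | .bot => 0
  | .eps => 1
  | .pre _ p => 1 + p.size
  | .or p q => p.size + q.size
  | .seq p q => p.size + q.size + 1
  | .inter p q => p.size + q.size + 1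

def LProp.nInter : LProp E → ℕ
  | .bot => 0
  | .eps => 0
  | .pre _ p => p.nInter
  | .or p q => p.nInter + q.nInter
  | .seq p q => p.nInter + q.nInter
  | .inter p q => p.nInter + q.nInter + 1

def GProp.size : GProp E → ℕ
  | .star p => p.size
  | .inter e f => e.size + f.size + 1

def GProp.nInter : GProp E → ℕ
  | .star p => p.nInter
  | .inter e f => e.nInter + f.nInter + 1

/-- Traces of `k`-sleeping form: nonempty concatenations of segments `tickᵏ · u · end` with `end ∉ u`. -/
def KSleepTrace (tick endE : E) (k : ℕ) (t : List E) : Prop :=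
  ∃ l : List (List E), l ≠ [] ∧
    (∀ s ∈ l, ∃ u : List E, endE ∉ u ∧ s = List.replicate k tick ++ u ++ [endE]) ∧
    t = l.flatten

/-- `k`-sleeping local property. -/
def KSleepL (tick endE : E) (k : ℕ) (p : LProp E) : Prop :=
  lsem p = {t | KSleepTrace tick endE k t}

/-- `k`-sleeping global property. -/
inductive KSleepG (tick endE : E) (k : ℕ) : GProp E → Prop
  | star {p} : KSleepL tick endE k p → KSleepG tick endE k (.star p)
  | inter {e f} : KSleepG tick endE k e → KSleepG tick endE k f → KSleepG tick endE k (.inter e f)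

/-- Field networks of monitored controllers. -/
inductive Net (E V : Type) : Type
  | node : GConf E → Proc E V → Net E V
  | par  : Net E V → Net E V → Net E V

/-- Network transitions other than time synchronisation (`bar` gives the complementary channel). -/
inductive NetStepAux (P : Set E) (tick endE : E) (bar : E → E) (env : V → Proc E V) :
    Net E V → Option E → Net E V → Prop
  | node {c J l c' J'} :
      MStep (SynStep P tick endE) (CStep env tick endE) (c, J) l (c', J') →
      NetStepAux P tick endE bar env (.node c J) l (.node c' J')
  | parL {n₁ l n₁' n₂} : NetStepAux P tick endE bar env n₁ l n₁' → l ≠ some tick →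
      NetStepAux P tick endE bar env (.par n₁ n₂) l (.par n₁' n₂)
  | parR {n₂ l n₂' n₁} : NetStepAux P tick endE bar env n₂ l n₂' → l ≠ some tick →
      NetStepAux P tick endE bar env (.par n₁ n₂) l (.par n₁ n₂')
  | sync {n₁ a n₁' n₂ n₂'} : NetStepAux P tick endE bar env n₁ (some a) n₁' →
      NetStepAux P tick endE bar env n₂ (some (bar a)) n₂' → a ≠ tick →
      NetStepAux P tick endE bar env (.par n₁ n₂) none (.par n₁' n₂')

/-- Network transitions, including time synchronisation with maximal progress. -/
inductive NetStep (P : Set E) (tick endE : E) (bar : E → E) (env : V → Proc E V) :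
    Net E V → Option E → Net E V → Prop
  | aux {n l n'} : NetStepAux P tick endE bar env n l n' → NetStep P tick endE bar env n l n'
  | timeSync {n₁ n₁' n₂ n₂'} : NetStep P tick endE bar env n₁ (some tick) n₁' →
      NetStep P tick endE bar env n₂ (some tick) n₂' →
      (∀ m, ¬ NetStepAux P tick endE bar env (.par n₁ n₂) none m) →
      NetStep P tick endE bar env (.par n₁ n₂) (some tick) (.par n₁' n₂')

inductive NetSteps (P : Set E) (tick endE : E) (bar : E → E) (env : V → Proc E V) :
    Net E V → List (Option E) → Net E V → Prop
  | nil {n} : NetSteps P tick endE bar env n [] n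
  | cons {n l n' ls n''} : NetStep P tick endE bar env n l n' →
      NetSteps P tick endE bar env n' ls n'' → NetSteps P tick endE bar env n (l :: ls) n''

end RTEnf

namespace RTEnf

variable {E V Q : Type} {estep : Q → EAct E → Q → Prop} {cstep : Proc E V → E → Proc E V → Prop}

theorem MStep.exists_eAct {q q' : Q} {J J' : Proc E V} {α : Option E}
    (h : MStep estep cstep (q, J) α (q', J')) :
    ∃ l, estep q l q' ∧ enfAct l = α ∧ (cstep J (ctrlAct l) J' ∨ J' = J) := by
  cases h with
  | allow hq hJ => exact ⟨_, hq, rfl, .inl hJ⟩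
  | suppress hq hJ => exact ⟨_, hq, rfl, .inl hJ⟩
  | insert hq _ _ => exact ⟨_, hq, rfl, .inr rfl⟩

theorem MSteps.exists_synSteps_ctrlFollow {P : Set E} {tick endE : E}
    (hP : ∀ J a J', cstep J a J' → a ∈ P) {c c' : GConf E} {J J' : Proc E V}
    {αs : List (Option E)} (h : MSteps (SynStep P tick endE) cstep (c, J) αs (c', J')) :
    ∃ ls, SynSteps P tick endE c ls c' ∧ ls.map enfAct = αs ∧ CtrlFollow P cstep J ls J' := by
  induction αs generalizing c J with
  | nil =>
    cases h
    exact ⟨[], .nil, rfl, .nil⟩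
  | cons α αs ih =>
    obtain _ | ⟨hstep, hrest⟩ := h
    obtain ⟨l, hsyn, hα, hctrl⟩ := hstep.exists_eAct
    obtain ⟨ls, hsyns, hαs, hfollow⟩ := ih hrest
    refine ⟨l :: ls, .cons hsyn hsyns, by rw [List.map_cons, hα, hαs], ?_⟩
    rcases hctrl with hJ | rfl
    · exact .step (hP _ _ _ hJ) hJ hfollow
    · exact .skip hfollow

end RTEnf

theorem trace_decomposition_general (E V : Type) (P : Set E) (tick endE : E)
    (env : V → RTEnf.Proc E V) (e : RTEnf.GProp E)
    (hP : ∀ (J : RTEnf.Proc E V) (a : E) (J' : RTEnf.Proc E V),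
      RTEnf.CStep env tick endE J a J' → a ∈ P)
    (Pc : RTEnf.Proc E V) (αs : List (Option E)) (c : RTEnf.GConf E) (J : RTEnf.Proc E V)
    (hrun : RTEnf.MSteps (RTEnf.SynStep P tick endE) (RTEnf.CStep env tick endE)
      (e.conf, Pc) αs (c, J)) :
    ∃ ls : List (RTEnf.EAct E),
      RTEnf.SynSteps P tick endE e.conf ls c ∧
      ls.map RTEnf.enfAct = αs ∧
      RTEnf.CtrlFollow P (RTEnf.CStep env tick endE) Pc ls J :=
  RTEnf.MSteps.exists_synSteps_ctrlFollow hP hrun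

/-- trace decomposition — any execution of the monitored controller can be
decomposed into a run of the enforcer and matching (or skipped) controller steps. -/
theorem trace_decomposition (E V : Type) (P : Set E) (tick endE : E)
    (env : V → RTEnf.Proc E V) (e : RTEnf.GProp E) (hev : e.events ⊆ P)
    (hP : ∀ (J : RTEnf.Proc E V) (a : E) (J' : RTEnf.Proc E V),
      RTEnf.CStep env tick endE J a J' → a ∈ P)
    (Pc : RTEnf.Proc E V) (αs : List (Option E)) (c : RTEnf.GConf E) (J : RTEnf.Proc E V)
    (hrun : RTEnf.MSteps (RTEnf.SynStep P tick endE) (RTEnf.CStep env tick endE)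
      (e.conf, Pc) αs (c, J)) :
    ∃ ls : List (RTEnf.EAct E),
      RTEnf.SynSteps P tick endE e.conf ls c ∧
      ls.map RTEnf.enfAct = αs ∧
      RTEnf.CtrlFollow P (RTEnf.CStep env tick endE) Pc ls J :=
  trace_decomposition_general E V P tick endE env e hP Pc αs c J hrun
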